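/- Conservation of mass and energy (Lemma 3.4): Let (ρ_e, m_e)_{e∈E} be a smooth solution on [0,T]. Then for every t ∈ [0,T]: M(t) = M(0), and E(t) + ∫_0^t D(s) ds = E(0). -/

import Mathlib

/-- A *smooth solution* of the compressible flow problem on the pipe network
determined by `src`, `dst`, `ℓ` on the time interval `[0, T]`, with adiabatic
exponent `γ`, viscosity coefficients `a`, friction coefficients `b` and pressure
coefficients `c`.  The fluid state on edge `e` is given by the density `ρ e t x`
and the mass flux `m e t x`; the functions `ρt, ρx, mt, mx, mxx` are the
corresponding partial derivatives.  The pressure law is `p_e(ρ) = c e * ρ ^ γ`,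
with potential energy density `P_e(ρ) = c e * ρ ^ γ / (γ - 1)` and
`P_e'(ρ) = c e * γ / (γ - 1) * ρ ^ (γ - 1)`.  A vertex `w` is interior if at least
two edges are incident, and a function `f_e` is evaluated at the vertex `src e`
as `f e t 0` and at `dst e` as `f e t (ℓ e)`. -/
def SmoothSolution {V E : Type} [Fintype V] [Fintype E] [DecidableEq V]
    (src dst : E → V) (ℓ : E → ℝ) (γ : ℝ) (a b c : E → ℝ) (T : ℝ)
    (ρ m ρt ρx mt mx mxx : E → ℝ → ℝ → ℝ) : Prop :=
  -- uniform positivity of the density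
  (∃ ρlow > (0 : ℝ), ∀ e, ∀ t ∈ Set.Icc 0 T, ∀ x ∈ Set.Icc 0 (ℓ e), ρlow ≤ ρ e t x) ∧
  -- ρ and m are continuously differentiable, and ∂ₓ m is continuously differentiable in x
  (∀ e, ∀ t ∈ Set.Icc 0 T, ∀ x ∈ Set.Icc 0 (ℓ e),
      HasDerivAt (fun s => ρ e s x) (ρt e t x) t ∧
      HasDerivAt (fun y => ρ e t y) (ρx e t x) x ∧
      HasDerivAt (fun s => m e s x) (mt e t x) t ∧
      HasDerivAt (fun y => m e t y) (mx e t x) x ∧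
      HasDerivAt (fun y => mx e t y) (mxx e t x) x) ∧
  (∀ e, ContinuousOn (fun q : ℝ × ℝ => ρ e q.1 q.2) (Set.Icc 0 T ×ˢ Set.Icc 0 (ℓ e))) ∧
  (∀ e, ContinuousOn (fun q : ℝ × ℝ => m e q.1 q.2) (Set.Icc 0 T ×ˢ Set.Icc 0 (ℓ e))) ∧
  (∀ e, ContinuousOn (fun q : ℝ × ℝ => ρt e q.1 q.2) (Set.Icc 0 T ×ˢ Set.Icc 0 (ℓ e))) ∧
  (∀ e, ContinuousOn (fun q : ℝ × ℝ => ρx e q.1 q.2) (Set.Icc 0 T ×ˢ Set.Icc 0 (ℓ e))) ∧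
  (∀ e, ContinuousOn (fun q : ℝ × ℝ => mt e q.1 q.2) (Set.Icc 0 T ×ˢ Set.Icc 0 (ℓ e))) ∧
  (∀ e, ContinuousOn (fun q : ℝ × ℝ => mx e q.1 q.2) (Set.Icc 0 T ×ˢ Set.Icc 0 (ℓ e))) ∧
  (∀ e, ∀ t ∈ Set.Icc 0 T, ContinuousOn (fun y => mxx e t y) (Set.Icc 0 (ℓ e))) ∧
  -- (i) conservation of mass:  ∂ₜ ρ + ∂ₓ m = 0
  (∀ e, ∀ t ∈ Set.Icc 0 T, ∀ x ∈ Set.Icc 0 (ℓ e), ρt e t x + mx e t x = 0) ∧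
  -- (ii) balance of momentum:
  --   ∂ₜ m + ∂ₓ (m²/ρ + p(ρ)) = a ρ ∂ₓ (ρ⁻² ∂ₓ m) - b |m| m / ρ
  (∀ e, ∀ t ∈ Set.Icc 0 T, ∀ x ∈ Set.Icc 0 (ℓ e), ∃ F G : ℝ,
      HasDerivAt (fun y => m e t y ^ 2 / ρ e t y + c e * ρ e t y ^ γ) F x ∧
      HasDerivAt (fun y => mx e t y / ρ e t y ^ 2) G x ∧
      mt e t x + F = a e * ρ e t x * G - b e * |m e t x| * m e t x / ρ e t x) ∧
  -- (iii) coupling conditions at interior vertices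
  (∀ w : V, 2 ≤ (Finset.univ.filter fun e : E => src e = w ∨ dst e = w).card →
    ∀ t ∈ Set.Icc 0 T,
      ((∑ e : E, ((if dst e = w then m e t (ℓ e) else 0)
          - (if src e = w then m e t 0 else 0))) = 0) ∧
      (∃ h : ℝ, ∀ e : E,
        (src e = w →
          m e t 0 ^ 2 / (2 * ρ e t 0 ^ 2) + c e * γ / (γ - 1) * ρ e t 0 ^ (γ - 1)
            - a e / ρ e t 0 ^ 2 * mx e t 0 = h) ∧
        (dst e = w →
          m e t (ℓ e) ^ 2 / (2 * ρ e t (ℓ e) ^ 2)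
            + c e * γ / (γ - 1) * ρ e t (ℓ e) ^ (γ - 1)
            - a e / ρ e t (ℓ e) ^ 2 * mx e t (ℓ e) = h))) ∧
  -- (iv) no-flux boundary condition at boundary vertices
  (∀ w : V, (Finset.univ.filter fun e : E => src e = w ∨ dst e = w).card < 2 →
    ∀ t ∈ Set.Icc 0 T, ∀ e : E,
      (src e = w → m e t 0 = 0) ∧ (dst e = w → m e t (ℓ e) = 0))

/-! Mass and energy densities `η` both satisfy a local balance law `∂ₜη + ∂ₓJ = -d` on each edge,
with flux `J = m` and dissipation `d = 0` for the mass, and flux `J = m H` and the dissipation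
density `d` of `D(t)` for the energy, where `H` is the quantity equated in the coupling condition
(iii). Integrating over `[0, t] × [0, ℓ_e]` (fundamental theorem of calculus in `t`, Fubini,
fundamental theorem of calculus in `x`) leaves only the boundary fluxes, and their sum over all
edges, regrouped by vertices, vanishes: at a boundary vertex `m = 0`, and at an interior vertex
`H` takes a common value, so the contribution is that value times the Kirchhoff sum of `m`. -/

open MeasureTheory Set

section Integration

variable {a b c d : ℝ}

theorem integrable_prod_restrict_Ioc_of_continuousOn {f : ℝ → ℝ → ℝ}
    (hf : ContinuousOn (Function.uncurry f) (Icc a b ×ˢ Icc c d)) :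
    Integrable (Function.uncurry f)
      ((volume.restrict (Ioc a b)).prod (volume.restrict (Ioc c d))) := by
  rw [Measure.prod_restrict]
  exact (hf.integrableOn_compact (isCompact_Icc.prod isCompact_Icc)).mono_set
    (prod_mono Ioc_subset_Icc_self Ioc_subset_Icc_self)

theorem intervalIntegral_integral_swap_of_continuousOn {f : ℝ → ℝ → ℝ} (hab : a ≤ b)
    (hcd : c ≤ d) (hf : ContinuousOn (Function.uncurry f) (Icc a b ×ˢ Icc c d)) :
    ∫ x in c..d, ∫ s in a..b, f s x = ∫ s in a..b, ∫ x in c..d, f s x := by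
  simp only [intervalIntegral.integral_of_le hab, intervalIntegral.integral_of_le hcd]
  exact (integral_integral_swap (integrable_prod_restrict_Ioc_of_continuousOn hf)).symm

theorem intervalIntegrable_intervalIntegral_of_continuousOn {f : ℝ → ℝ → ℝ} (hab : a ≤ b)
    (hcd : c ≤ d) (hf : ContinuousOn (Function.uncurry f) (Icc a b ×ˢ Icc c d)) :
    IntervalIntegrable (fun s => ∫ x in c..d, f s x) volume a b := by
  rw [intervalIntegrable_iff_integrableOn_Ioc_of_le hab]
  simp only [intervalIntegral.integral_of_le hcd]
  exact (integrable_prod_restrict_Ioc_of_continuousOn hf).integral_prod_left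

theorem intervalIntegral_sub_eq_integral_intervalIntegral_of_hasDerivAt {η ηt : ℝ → ℝ → ℝ}
    (hab : a ≤ b) (hcd : c ≤ d)
    (hderiv : ∀ s ∈ Icc a b, ∀ x ∈ Icc c d, HasDerivAt (η · x) (ηt s x) s)
    (hη : ContinuousOn (Function.uncurry η) (Icc a b ×ˢ Icc c d))
    (hηt : ContinuousOn (Function.uncurry ηt) (Icc a b ×ˢ Icc c d)) :
    (∫ x in c..d, η b x) - ∫ x in c..d, η a x = ∫ s in a..b, ∫ x in c..d, ηt s x := by
  have hsection : ∀ s ∈ Icc a b, IntervalIntegrable (η s) volume c d := fun s hs =>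
    (hη.uncurry_left s hs).intervalIntegrable_of_Icc hcd
  rw [← intervalIntegral.integral_sub (hsection b ⟨hab, le_rfl⟩) (hsection a ⟨le_rfl, hab⟩),
    ← intervalIntegral_integral_swap_of_continuousOn hab hcd hηt]
  refine intervalIntegral.integral_congr fun x hx => ?_
  rw [uIcc_of_le hcd] at hx
  refine (intervalIntegral.integral_eq_sub_of_hasDerivAt (f := (η · x)) (fun s hs => ?_)
    ((hηt.uncurry_right x hx).intervalIntegrable_of_Icc hab)).symm
  exact hderiv s (uIcc_of_le hab ▸ hs) x hx

theorem intervalIntegral_eq_sub_sub_of_hasDerivAt_neg_add {J g k : ℝ → ℝ} (hcd : c ≤ d)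
    (hJ : ∀ x ∈ Icc c d, HasDerivAt J (-(g x + k x)) x)
    (hg : ContinuousOn g (Icc c d)) (hk : ContinuousOn k (Icc c d)) :
    ∫ x in c..d, g x = J c - J d - ∫ x in c..d, k x := by
  have hgi := hg.intervalIntegrable_of_Icc (μ := volume) hcd
  have hki := hk.intervalIntegrable_of_Icc (μ := volume) hcd
  have hftc := intervalIntegral.integral_eq_sub_of_hasDerivAt
    (fun x hx => hJ x (uIcc_of_le hcd ▸ hx)) (hgi.add hki).neg
  rw [intervalIntegral.integral_neg, intervalIntegral.integral_add hgi hki] at hftc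
  linarith

end Integration

theorem sum_intervalIntegral_add_integral_eq_of_balance {E : Type*} [Fintype E] (ℓ : E → ℝ)
    (hℓ : ∀ e, 0 ≤ ℓ e) {T t : ℝ} (ht : t ∈ Icc 0 T) (η ηt J d : E → ℝ → ℝ → ℝ)
    (hη_deriv : ∀ e, ∀ s ∈ Icc 0 T, ∀ x ∈ Icc 0 (ℓ e), HasDerivAt (η e · x) (ηt e s x) s)
    (hJ_deriv : ∀ e, ∀ s ∈ Icc 0 T, ∀ x ∈ Icc 0 (ℓ e),
      HasDerivAt (J e s) (-(ηt e s x + d e s x)) x)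
    (hflux : ∀ s ∈ Icc 0 T, ∑ e, (J e s (ℓ e) - J e s 0) = 0)
    (hη_cont : ∀ e, ContinuousOn (Function.uncurry (η e)) (Icc 0 T ×ˢ Icc 0 (ℓ e)))
    (hηt_cont : ∀ e, ContinuousOn (Function.uncurry (ηt e)) (Icc 0 T ×ˢ Icc 0 (ℓ e)))
    (hd_cont : ∀ e, ContinuousOn (Function.uncurry (d e)) (Icc 0 T ×ˢ Icc 0 (ℓ e))) :
    (∑ e, ∫ x in (0 : ℝ)..(ℓ e), η e t x)
        + (∫ s in (0 : ℝ)..t, ∑ e, ∫ x in (0 : ℝ)..(ℓ e), d e s x)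
      = ∑ e, ∫ x in (0 : ℝ)..(ℓ e), η e 0 x := by
  have hsub : Icc 0 t ⊆ Icc 0 T := Icc_subset_Icc_right ht.2
  have hrect : ∀ e, Icc 0 t ×ˢ Icc 0 (ℓ e) ⊆ Icc 0 T ×ˢ Icc 0 (ℓ e) := fun e =>
    prod_mono hsub subset_rfl
  have hedge : ∀ e, (∫ x in (0 : ℝ)..(ℓ e), η e t x) - ∫ x in (0 : ℝ)..(ℓ e), η e 0 x
      = ∫ s in (0 : ℝ)..t, ∫ x in (0 : ℝ)..(ℓ e), ηt e s x := fun e =>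
    intervalIntegral_sub_eq_integral_intervalIntegral_of_hasDerivAt ht.1 (hℓ e)
      (fun s hs => hη_deriv e s (hsub hs)) ((hη_cont e).mono (hrect e))
      ((hηt_cont e).mono (hrect e))
  have hspace : ∀ s ∈ Icc 0 T, ∑ e, ∫ x in (0 : ℝ)..(ℓ e), ηt e s x
      = -∑ e, ∫ x in (0 : ℝ)..(ℓ e), d e s x := by
    intro s hs
    have hedge_s : ∀ e, ∫ x in (0 : ℝ)..(ℓ e), ηt e s x
        = J e s 0 - J e s (ℓ e) - ∫ x in (0 : ℝ)..(ℓ e), d e s x := fun e =>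
      intervalIntegral_eq_sub_sub_of_hasDerivAt_neg_add (hℓ e) (hJ_deriv e s hs)
        ((hηt_cont e).uncurry_left s hs) ((hd_cont e).uncurry_left s hs)
    have hflux_s := hflux s hs
    rw [Finset.sum_sub_distrib] at hflux_s
    rw [Finset.sum_congr rfl fun e _ => hedge_s e, Finset.sum_sub_distrib, Finset.sum_sub_distrib]
    linarith
  have htotal : ∑ e, ((∫ x in (0 : ℝ)..(ℓ e), η e t x) - ∫ x in (0 : ℝ)..(ℓ e), η e 0 x)
      = -∫ s in (0 : ℝ)..t, ∑ e, ∫ x in (0 : ℝ)..(ℓ e), d e s x := by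
    rw [Finset.sum_congr rfl fun e _ => hedge e, ← intervalIntegral.integral_finsetSum
      fun e _ => intervalIntegrable_intervalIntegral_of_continuousOn ht.1 (hℓ e)
        ((hηt_cont e).mono (hrect e)), ← intervalIntegral.integral_neg]
    exact intervalIntegral.integral_congr fun s hs => hspace s (hsub (uIcc_of_le ht.1 ▸ hs))
  rw [Finset.sum_sub_distrib] at htotal
  linarith

noncomputable def energyDensity (c γ ρ m : ℝ) : ℝ := m ^ 2 / (2 * ρ) + c * ρ ^ γ / (γ - 1)

noncomputable def energyDensityDeriv (c γ ρ m ρ' m' : ℝ) : ℝ :=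
  m / ρ * m' + (c * γ / (γ - 1) * ρ ^ (γ - 1) - m ^ 2 / (2 * ρ ^ 2)) * ρ'

/-- The quantity equated at interior vertices by the coupling condition (iii); the energy flux
along an edge is `m * vertexPotential`. -/
noncomputable def vertexPotential (a c γ ρ m mx : ℝ) : ℝ :=
  m ^ 2 / (2 * ρ ^ 2) + c * γ / (γ - 1) * ρ ^ (γ - 1) - a / ρ ^ 2 * mx

noncomputable def dissipationDensity (a b ρ m mx : ℝ) : ℝ :=
  a * mx ^ 2 / ρ ^ 2 + b * |m| ^ 3 / ρ ^ 2

section Calculus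

variable {r m q : ℝ → ℝ} {x : ℝ}

theorem HasDerivAt.energyDensity {r' m' : ℝ} (c γ : ℝ) (hr : HasDerivAt r r' x)
    (hm : HasDerivAt m m' x) (h0 : r x ≠ 0) :
    HasDerivAt (fun y => energyDensity c γ (r y) (m y))
      (energyDensityDeriv c γ (r x) (m x) r' m') x := by
  have hkin := (hm.pow 2).div (hr.const_mul 2) (mul_ne_zero two_ne_zero h0)
  have hpot := ((hr.rpow_const (p := γ) (Or.inl h0)).const_mul c).div_const (γ - 1)
  refine (hkin.add hpot).congr_deriv ?_
  simp only [energyDensityDeriv, Pi.pow_apply]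
  field_simp
  ring

/-- The local energy balance `∂ₜη + ∂ₓ(m H) = -d`, given the mass equation `ρₜ + mₓ = 0` and the
momentum equation `mₜ + F = a ρ G - b |m| m / ρ`. -/
theorem hasDerivAt_mul_vertexPotential {rx qx rt mt F G a b c γ : ℝ} (hγ : γ ≠ 1)
    (h0 : r x ≠ 0) (hr : HasDerivAt r rx x) (hm : HasDerivAt m (q x) x) (hq : HasDerivAt q qx x)
    (hF : HasDerivAt (fun y => m y ^ 2 / r y + c * r y ^ γ) F x)
    (hG : HasDerivAt (fun y => q y / r y ^ 2) G x)
    (hmomentum : mt + F = a * r x * G - b * |m x| * m x / r x) (hmass : rt + q x = 0) :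
    HasDerivAt (fun y => m y * vertexPotential a c γ (r y) (m y) (q y))
      (-(energyDensityDeriv c γ (r x) (m x) rt mt + dissipationDensity a b (r x) (m x) (q x)))
      x := by
  have hr2 : r x ^ 2 ≠ 0 := pow_ne_zero 2 h0
  have hγ1 : γ - 1 ≠ 0 := sub_ne_zero.mpr hγ
  have hF' := hF.unique (((hm.pow 2).div hr h0).add ((hr.rpow_const (Or.inl h0)).const_mul c))
  have hG' := hG.unique (hq.div (hr.pow 2) hr2)
  have hH := (((hm.pow 2).div ((hr.pow 2).const_mul 2) (mul_ne_zero two_ne_zero hr2)).add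
    ((hr.rpow_const (p := γ - 1) (Or.inl h0)).const_mul (c * γ / (γ - 1)))).sub
    (((hasDerivAt_const x a).div (hr.pow 2) hr2).mul hq)
  refine (hm.mul hH).congr_deriv ?_
  have hmt : mt = a * r x * G - b * |m x| * m x / r x - F := by linarith
  have hrt : rt = -q x := by linarith
  have habs : |m x| ^ 3 = |m x| * m x ^ 2 := by rw [pow_succ', sq_abs]
  subst hmt hrt hF' hG'
  simp only [energyDensityDeriv, dissipationDensity, Pi.pow_apply, Pi.add_apply, Pi.sub_apply,
    Pi.div_apply, Pi.mul_apply]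
  rw [habs, Real.rpow_sub_one h0 (γ - 1)]
  generalize r x ^ (γ - 1) = v
  field_simp
  ring

end Calculus

section Continuity

variable {X : Type*} [TopologicalSpace X] {S : Set X} {r m : X → ℝ}

theorem ContinuousOn.energyDensity (c γ : ℝ) (hr : ContinuousOn r S) (hm : ContinuousOn m S)
    (h0 : ∀ p ∈ S, r p ≠ 0) : ContinuousOn (fun p => energyDensity c γ (r p) (m p)) S :=
  ((hm.pow 2).div (continuousOn_const.mul hr) fun p hp => mul_ne_zero two_ne_zero (h0 p hp)).add
    ((continuousOn_const.mul (hr.rpow_const fun p hp => Or.inl (h0 p hp))).div_const _)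

theorem ContinuousOn.energyDensityDeriv {r' m' : X → ℝ} (c γ : ℝ) (hr : ContinuousOn r S)
    (hm : ContinuousOn m S) (hr' : ContinuousOn r' S) (hm' : ContinuousOn m' S)
    (h0 : ∀ p ∈ S, r p ≠ 0) :
    ContinuousOn (fun p => energyDensityDeriv c γ (r p) (m p) (r' p) (m' p)) S :=
  ((hm.div hr h0).mul hm').add
    (((continuousOn_const.mul (hr.rpow_const fun p hp => Or.inl (h0 p hp))).sub
      ((hm.pow 2).div (continuousOn_const.mul (hr.pow 2))
        fun p hp => mul_ne_zero two_ne_zero (pow_ne_zero 2 (h0 p hp)))).mul hr')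

theorem ContinuousOn.dissipationDensity {q : X → ℝ} (a b : ℝ) (hr : ContinuousOn r S)
    (hm : ContinuousOn m S) (hq : ContinuousOn q S) (h0 : ∀ p ∈ S, r p ≠ 0) :
    ContinuousOn (fun p => dissipationDensity a b (r p) (m p) (q p)) S :=
  ((continuousOn_const.mul (hq.pow 2)).div (hr.pow 2) fun p hp => pow_ne_zero 2 (h0 p hp)).add
    ((continuousOn_const.mul (hm.abs.pow 3)).div (hr.pow 2) fun p hp => pow_ne_zero 2 (h0 p hp))

end Continuity

section Network

variable {V E : Type*} [Fintype E] [DecidableEq V] (src dst : E → V)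

noncomputable def netInflow (atSrc atDst : E → ℝ) (w : V) : ℝ :=
  ∑ e, ((if dst e = w then atDst e else 0) - (if src e = w then atSrc e else 0))

theorem sum_netInflow [Fintype V] (atSrc atDst : E → ℝ) :
    ∑ w, netInflow src dst atSrc atDst w = ∑ e, (atDst e - atSrc e) := by
  simp only [netInflow]
  rw [Finset.sum_comm]
  simp only [Finset.sum_sub_distrib, Finset.sum_ite_eq, Finset.mem_univ, if_true]

variable {src dst}

theorem netInflow_mul_of_forall_eq {atSrc atDst Hs Hd : E → ℝ} {w : V} {k : ℝ}
    (hk : ∀ e, (src e = w → Hs e = k) ∧ (dst e = w → Hd e = k)) :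
    netInflow src dst (fun e => atSrc e * Hs e) (fun e => atDst e * Hd e) w
      = k * netInflow src dst atSrc atDst w := by
  simp only [netInflow, Finset.mul_sum, mul_sub]
  refine Finset.sum_congr rfl fun e _ => ?_
  congr 1 <;> split_ifs with h
  exacts [by rw [(hk e).2 h, mul_comm], (mul_zero k).symm, by rw [(hk e).1 h, mul_comm],
    (mul_zero k).symm]

theorem netInflow_eq_zero_of_forall {atSrc atDst : E → ℝ} {w : V}
    (h : ∀ e, (src e = w → atSrc e = 0) ∧ (dst e = w → atDst e = 0)) :
    netInflow src dst atSrc atDst w = 0 := by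
  refine Finset.sum_eq_zero fun e _ => ?_
  rw [ite_eq_right_iff.mpr (h e).2, ite_eq_right_iff.mpr (h e).1, sub_zero]

theorem sum_mul_sub_mul_eq_zero_of_kirchhoff [Fintype V] {atSrc atDst Hs Hd : E → ℝ}
    (hv : ∀ w, (netInflow src dst atSrc atDst w = 0 ∧
        ∃ k, ∀ e, (src e = w → Hs e = k) ∧ (dst e = w → Hd e = k)) ∨
      ∀ e, (src e = w → atSrc e = 0) ∧ (dst e = w → atDst e = 0)) :
    ∑ e, (atDst e * Hd e - atSrc e * Hs e) = 0 := by
  rw [← sum_netInflow src dst (fun e => atSrc e * Hs e)]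
  refine Finset.sum_eq_zero fun w _ => ?_
  rcases hv w with ⟨hnet, k, hk⟩ | hzero
  · rw [netInflow_mul_of_forall_eq hk, hnet, mul_zero]
  · refine netInflow_eq_zero_of_forall fun e => ⟨fun h => ?_, fun h => ?_⟩
    · rw [(hzero e).1 h, zero_mul]
    · rw [(hzero e).2 h, zero_mul]

end Network

theorem conservation_of_mass_and_energy_general
    {V E : Type} [Fintype V] [Fintype E] [DecidableEq V]
    (src dst : E → V) (ℓ : E → ℝ) (hℓ : ∀ e, 0 < ℓ e)
    (γ : ℝ) (hγ : 1 < γ) (a b c : E → ℝ)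
    (T : ℝ)
    (ρ m ρt ρx mt mx mxx : E → ℝ → ℝ → ℝ)
    (hsol : SmoothSolution src dst ℓ γ a b c T ρ m ρt ρx mt mx mxx)
    (t : ℝ) (ht : t ∈ Set.Icc 0 T) :
    ((∑ e, ∫ x in (0 : ℝ)..(ℓ e), ρ e t x)
        = ∑ e, ∫ x in (0 : ℝ)..(ℓ e), ρ e 0 x) ∧
    ((∑ e, ∫ x in (0 : ℝ)..(ℓ e),
        (m e t x ^ 2 / (2 * ρ e t x) + c e * ρ e t x ^ γ / (γ - 1)))
      + (∫ s in (0 : ℝ)..t, ∑ e, ∫ x in (0 : ℝ)..(ℓ e),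
          (a e * mx e s x ^ 2 / ρ e s x ^ 2 + b e * |m e s x| ^ 3 / ρ e s x ^ 2))
      = ∑ e, ∫ x in (0 : ℝ)..(ℓ e),
          (m e 0 x ^ 2 / (2 * ρ e 0 x) + c e * ρ e 0 x ^ γ / (γ - 1))) := by
  obtain ⟨⟨ρlow, hρlow, hρge⟩, hderiv, hρc, hmc, hρtc, -, hmtc, hmxc, -, hmass, hmomentum,
    hinterior, hboundary⟩ := hsol
  have hℓ' : ∀ e, 0 ≤ ℓ e := fun e => (hℓ e).le
  have hρ0 : ∀ e, ∀ q ∈ Icc 0 T ×ˢ Icc 0 (ℓ e), ρ e q.1 q.2 ≠ 0 := fun e q hq =>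
    (hρlow.trans_le (hρge e q.1 hq.1 q.2 hq.2)).ne'
  have hvertex : ∀ s ∈ Icc 0 T, ∀ w,
      (netInflow src dst (fun e => m e s 0) (fun e => m e s (ℓ e)) w = 0 ∧ ∃ k, ∀ e,
        (src e = w → vertexPotential (a e) (c e) γ (ρ e s 0) (m e s 0) (mx e s 0) = k) ∧
        (dst e = w → vertexPotential (a e) (c e) γ (ρ e s (ℓ e)) (m e s (ℓ e)) (mx e s (ℓ e)) = k))
      ∨ ∀ e, (src e = w → m e s 0 = 0) ∧ (dst e = w → m e s (ℓ e) = 0) := fun s hs w =>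
    (le_or_gt 2 _).imp (fun h => hinterior w h s hs) (fun h => hboundary w h s hs)
  constructor
  · have hbalance := sum_intervalIntegral_add_integral_eq_of_balance ℓ hℓ' ht ρ ρt m
      (fun _ _ _ => 0) (fun e s hs x hx => (hderiv e s hs x hx).1)
      (fun e s hs x hx => by
        simpa [eq_neg_of_add_eq_zero_right (hmass e s hs x hx)] using (hderiv e s hs x hx).2.2.2.1)
      (fun s hs => by
        simpa using sum_mul_sub_mul_eq_zero_of_kirchhoff (Hs := 1) (Hd := 1) fun w =>
          (hvertex s hs w).imp_left fun h => ⟨h.1, 1, fun _ => ⟨fun _ => rfl, fun _ => rfl⟩⟩)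
      hρc hρtc (fun _ => continuousOn_const)
    simpa using hbalance
  · exact sum_intervalIntegral_add_integral_eq_of_balance ℓ hℓ' ht
      (fun e s x => energyDensity (c e) γ (ρ e s x) (m e s x))
      (fun e s x => energyDensityDeriv (c e) γ (ρ e s x) (m e s x) (ρt e s x) (mt e s x))
      (fun e s x => m e s x * vertexPotential (a e) (c e) γ (ρ e s x) (m e s x) (mx e s x))
      (fun e s x => dissipationDensity (a e) (b e) (ρ e s x) (m e s x) (mx e s x))
      (fun e s hs x hx => (hderiv e s hs x hx).1.energyDensity (c e) γ (hderiv e s hs x hx).2.2.1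
        (hρ0 e (s, x) ⟨hs, hx⟩))
      (fun e s hs x hx => by
        obtain ⟨F, G, hF, hG, hFG⟩ := hmomentum e s hs x hx
        obtain ⟨-, hρx, -, hmx, hmxx⟩ := hderiv e s hs x hx
        exact hasDerivAt_mul_vertexPotential hγ.ne' (hρ0 e (s, x) ⟨hs, hx⟩) hρx hmx hmxx hF hG
          hFG (hmass e s hs x hx))
      (fun s hs => sum_mul_sub_mul_eq_zero_of_kirchhoff (hvertex s hs))
      (fun e => (hρc e).energyDensity (c e) γ (hmc e) (hρ0 e))
      (fun e => (hρc e).energyDensityDeriv (c e) γ (hmc e) (hρtc e) (hmtc e) (hρ0 e))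
      (fun e => (hρc e).dissipationDensity (a e) (b e) (hmc e) (hmxc e) (hρ0 e))

/-- **Conservation of mass and energy (Lemma 3.4).**  Let `(ρ, m)` be a smooth solution
on `[0,T]`.  Then for every `t ∈ [0,T]`: the total mass satisfies `M(t) = M(0)`, and the
total energy satisfies `E(t) + ∫_0^t D(s) ds = E(0)`, where
`M(t) = Σ_e ∫_0^{ℓ_e} ρ dx`, `E(t) = Σ_e ∫_0^{ℓ_e} ( m²/(2ρ) + P(ρ) ) dx` and
`D(t) = Σ_e ∫_0^{ℓ_e} ( a_e |∂ₓ m|²/ρ² + b_e |m|³/ρ² ) dx`. -/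
theorem conservation_of_mass_and_energy
    {V E : Type} [Fintype V] [Fintype E] [DecidableEq V]
    (src dst : E → V) (ℓ : E → ℝ) (hℓ : ∀ e, 0 < ℓ e)
    (γ : ℝ) (hγ : 1 < γ) (a b c : E → ℝ)
    (ha : ∀ e, 0 ≤ a e) (hb : ∀ e, 0 ≤ b e) (hc : ∀ e, 0 < c e)
    (T : ℝ) (hT : 0 ≤ T)
    (ρ m ρt ρx mt mx mxx : E → ℝ → ℝ → ℝ)
    (hsol : SmoothSolution src dst ℓ γ a b c T ρ m ρt ρx mt mx mxx)
    (t : ℝ) (ht : t ∈ Set.Icc 0 T) :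
    ((∑ e, ∫ x in (0 : ℝ)..(ℓ e), ρ e t x)
        = ∑ e, ∫ x in (0 : ℝ)..(ℓ e), ρ e 0 x) ∧
    ((∑ e, ∫ x in (0 : ℝ)..(ℓ e),
        (m e t x ^ 2 / (2 * ρ e t x) + c e * ρ e t x ^ γ / (γ - 1)))
      + (∫ s in (0 : ℝ)..t, ∑ e, ∫ x in (0 : ℝ)..(ℓ e),
          (a e * mx e s x ^ 2 / ρ e s x ^ 2 + b e * |m e s x| ^ 3 / ρ e s x ^ 2))
      = ∑ e, ∫ x in (0 : ℝ)..(ℓ e),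
          (m e 0 x ^ 2 / (2 * ρ e 0 x) + c e * ρ e 0 x ^ γ / (γ - 1))) :=
  conservation_of_mass_and_energy_general src dst ℓ hℓ γ hγ a b c T ρ m ρt ρx mt mx mxx hsol t ht
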